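/- Let L : [0,∞) → [0,∞) be a continuous nondecreasing function with L(0) = 0 and L(t) → ∞ as t → ∞, and define its right-continuous right-inverse τ(s) := sup{r ≥ 0 : L(r) ≤ s}. Then for every bounded measurable function f : ℝ → ℝ and all 0 ≤ a ≤ b, the Lebesgue–Stieltjes integral ∫_{(τ(a), τ(b)]} f(s) dL(s) equals ∫_a^b f(τ(s)) ds. -/

import Mathlib

/-!
For `s ≥ 0` the right-inverse satisfies `c ≤ τ s ↔ L c ≤ s`, so `τ` pulls `[c, d)` back to
`[L c, L d) ∩ [0, ∞)`; as `L` is continuous, `dL [c, d) = L d - L c`, hence `τ` pushes Lebesgue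
measure on `[0, ∞)` forward to `dL` on `[0, ∞)`. Moreover `L ∘ τ = id` on `[0, ∞)`, so `τ` is
strictly increasing there and pulls `(τ a, τ b]` back to `(a, b]`. The identity is then the
change of variables formula for this pushforward.
-/

open MeasureTheory Filter Set Topology

noncomputable def rightInv (L : ℝ → ℝ) (s : ℝ) : ℝ := sSup {r : ℝ | 0 ≤ r ∧ L r ≤ s}

section RightInv

variable {L : ℝ → ℝ}

lemma rightInv_nonneg (s : ℝ) : 0 ≤ rightInv L s :=
  Real.sSup_nonneg fun _ hr => hr.1

lemma bddAbove_nonneg_sublevel (hLtop : Tendsto L atTop atTop) (s : ℝ) :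
    BddAbove {r : ℝ | 0 ≤ r ∧ L r ≤ s} := by
  obtain ⟨M, hM⟩ := eventually_atTop.1 (hLtop.eventually (eventually_gt_atTop s))
  exact ⟨M, fun r hr => not_lt.1 fun hMr => (hM r hMr.le).not_ge hr.2⟩

lemma le_rightInv_of_le (hLtop : Tendsto L atTop atTop) {r s : ℝ} (hr : 0 ≤ r) (h : L r ≤ s) :
    r ≤ rightInv L s :=
  le_csSup (bddAbove_nonneg_sublevel hLtop s) ⟨hr, h⟩

lemma monotone_rightInv (hLtop : Tendsto L atTop atTop) : Monotone (rightInv L) :=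
  fun _ t hst => Real.sSup_le (fun _ hr => le_rightInv_of_le hLtop hr.1 (hr.2.trans hst))
    (rightInv_nonneg t)

lemma map_rightInv_le (hLcont : Continuous L) (hL0 : L 0 = 0) (hLtop : Tendsto L atTop atTop)
    {s : ℝ} (hs : 0 ≤ s) : L (rightInv L s) ≤ s := by
  have hclosed : IsClosed {r : ℝ | 0 ≤ r ∧ L r ≤ s} :=
    isClosed_Ici.inter (isClosed_Iic.preimage hLcont)
  exact (hclosed.csSup_mem ⟨0, le_rfl, hL0.le.trans hs⟩ (bddAbove_nonneg_sublevel hLtop s)).2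

lemma le_rightInv_iff (hLmono : Monotone L) (hLcont : Continuous L) (hL0 : L 0 = 0)
    (hLtop : Tendsto L atTop atTop) {s : ℝ} (hs : 0 ≤ s) (c : ℝ) :
    c ≤ rightInv L s ↔ L c ≤ s := by
  refine ⟨fun h => (hLmono h).trans (map_rightInv_le hLcont hL0 hLtop hs), fun h => ?_⟩
  have hmax : L (max c 0) ≤ s := by rw [hLmono.map_max, hL0]; exact max_le h hs
  exact (le_max_left c 0).trans (le_rightInv_of_le hLtop (le_max_right c 0) hmax)

lemma map_rightInv (hLmono : Monotone L) (hLcont : Continuous L) (hL0 : L 0 = 0)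
    (hLtop : Tendsto L atTop atTop) {s : ℝ} (hs : 0 ≤ s) : L (rightInv L s) = s := by
  refine (map_rightInv_le hLcont hL0 hLtop hs).antisymm (not_lt.1 fun hlt => ?_)
  obtain ⟨r, hrL, hr⟩ : ∃ r, L r < s ∧ rightInv L s < r :=
    (((hLcont.tendsto _).eventually (gt_mem_nhds hlt)).filter_mono nhdsWithin_le_nhds
      |>.and self_mem_nhdsWithin).exists (f := 𝓝[>] rightInv L s)
  exact hr.not_ge ((le_rightInv_iff hLmono hLcont hL0 hLtop hs r).2 hrL.le)

lemma strictMonoOn_rightInv (hLmono : Monotone L) (hLcont : Continuous L) (hL0 : L 0 = 0)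
    (hLtop : Tendsto L atTop atTop) : StrictMonoOn (rightInv L) (Ici 0) := by
  intro s hs t ht hst
  refine not_le.1 fun hle => hst.not_ge ?_
  rw [← map_rightInv hLmono hLcont hL0 hLtop hs, ← map_rightInv hLmono hLcont hL0 hLtop ht]
  exact hLmono hle

lemma rightInv_preimage_Ico_inter_Ici (hLmono : Monotone L) (hLcont : Continuous L)
    (hL0 : L 0 = 0) (hLtop : Tendsto L atTop atTop) (c d : ℝ) :
    rightInv L ⁻¹' Ico c d ∩ Ici 0 = Ico (max (L c) 0) (L d) := by
  ext s
  by_cases hs : 0 ≤ s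
  · have galois := le_rightInv_iff hLmono hLcont hL0 hLtop hs
    simp only [mem_inter_iff, mem_preimage, mem_Ico, mem_Ici, max_le_iff, ← not_le, galois, hs,
      and_true]
  · simp [hs]

end RightInv

lemma StrictMonoOn.preimage_Ioc_inter {α β : Type*} [LinearOrder α] [Preorder β] {f : α → β}
    {s : Set α} (hf : StrictMonoOn f s) {a b : α} (ha : a ∈ s) (hb : b ∈ s) :
    f ⁻¹' Ioc (f a) (f b) ∩ s = Ioc a b ∩ s := by
  ext x
  simp only [mem_inter_iff, mem_preimage, mem_Ioc]
  constructor
  · rintro ⟨⟨hax, hxb⟩, hx⟩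
    exact ⟨⟨(hf.lt_iff_lt ha hx).1 hax, (hf.le_iff_le hx hb).1 hxb⟩, hx⟩
  · rintro ⟨⟨hax, hxb⟩, hx⟩
    exact ⟨⟨(hf.lt_iff_lt ha hx).2 hax, (hf.le_iff_le hx hb).2 hxb⟩, hx⟩

lemma map_rightInv_volume_restrict_Ici {L : StieltjesFunction ℝ} (hLcont : Continuous L) (hL0 : L 0 = 0)
    (hLtop : Tendsto L atTop atTop) :
    (volume.restrict (Ici 0)).map (rightInv L) = L.measure.restrict (Ici 0) := by
  have hmeas : Measurable (rightInv L) := (monotone_rightInv hLtop).measurable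
  have hleftLim (x : ℝ) : Function.leftLim L x = L x :=
    hLcont.continuousAt.continuousWithinAt.leftLim_eq
  have hpre := rightInv_preimage_Ico_inter_Ici L.mono hLcont hL0 hLtop
  refine Measure.ext_of_Ico' _ _ (fun c d _ => ?_) (fun c d _ => ?_)
  · rw [Measure.map_apply hmeas measurableSet_Ico,
      Measure.restrict_apply (hmeas measurableSet_Ico), hpre]
    exact measure_Ico_lt_top.ne
  · rw [Measure.map_apply hmeas measurableSet_Ico,
      Measure.restrict_apply (hmeas measurableSet_Ico), hpre,
      Measure.restrict_apply measurableSet_Ico, Ico_inter_Ici, L.measure_Ico, Real.volume_Ico,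
      hleftLim, hleftLim, L.mono.map_max, hL0]

theorem stmt_0_general (L : StieltjesFunction ℝ)
    (hLcont : Continuous L)
    (hL0 : L 0 = 0)
    (hLtop : Tendsto L atTop atTop)
    (τ : ℝ → ℝ)
    (hτ : ∀ s, τ s = sSup {r : ℝ | 0 ≤ r ∧ L r ≤ s})
    (f : ℝ → ℝ) (hf : Measurable f)
    (a b : ℝ) (ha : 0 ≤ a) (hab : a ≤ b) :
    ∫ s in Set.Ioc (τ a) (τ b), f s ∂L.measure = ∫ s in a..b, f (τ s) := by
  obtain rfl : τ = rightInv L := funext hτ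
  have hmeas : Measurable (rightInv L) := (monotone_rightInv hLtop).measurable
  have hsub : Ioc (rightInv L a) (rightInv L b) ⊆ Ici 0 :=
    Ioc_subset_Ioi_self.trans (Ioi_subset_Ici (rightInv_nonneg a))
  have hpre : rightInv L ⁻¹' Ioc (rightInv L a) (rightInv L b) ∩ Ici 0 = Ioc a b := by
    rw [(strictMonoOn_rightInv L.mono hLcont hL0 hLtop).preimage_Ioc_inter ha (ha.trans hab),
      inter_eq_left.2 (Ioc_subset_Ioi_self.trans (Ioi_subset_Ici ha))]
  calc ∫ s in Ioc (rightInv L a) (rightInv L b), f s ∂L.measure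
      = ∫ s in Ioc (rightInv L a) (rightInv L b), f s ∂(L.measure.restrict (Ici 0)) := by
        rw [Measure.restrict_restrict_of_subset hsub]
    _ = ∫ s in rightInv L ⁻¹' Ioc (rightInv L a) (rightInv L b), f (rightInv L s)
          ∂(volume.restrict (Ici 0)) := by
        rw [← map_rightInv_volume_restrict_Ici hLcont hL0 hLtop]
        exact setIntegral_map measurableSet_Ioc hf.aestronglyMeasurable hmeas.aemeasurable
    _ = ∫ s in Ioc a b, f (rightInv L s) := by
        rw [Measure.restrict_restrict (hmeas measurableSet_Ioc), hpre]
    _ = ∫ s in a..b, f (rightInv L s) := (intervalIntegral.integral_of_le hab).symm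

/-- Change of variables for the Lebesgue–Stieltjes integral with respect to a
continuous nondecreasing `L` with `L 0 = 0` diverging to infinity, and its
right-continuous right-inverse `τ`. -/
theorem stmt_0 (L : StieltjesFunction ℝ)
    (hLcont : Continuous L)
    (hL0 : L 0 = 0)
    (hLtop : Tendsto L atTop atTop)
    (τ : ℝ → ℝ)
    (hτ : ∀ s, τ s = sSup {r : ℝ | 0 ≤ r ∧ L r ≤ s})
    (f : ℝ → ℝ) (hf : Measurable f) (C : ℝ) (hfb : ∀ x, |f x| ≤ C)
    (a b : ℝ) (ha : 0 ≤ a) (hab : a ≤ b) :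
    ∫ s in Set.Ioc (τ a) (τ b), f s ∂L.measure = ∫ s in a..b, f (τ s) :=
  stmt_0_general L hLcont hL0 hLtop τ hτ f hf a b ha hab
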